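/- Given a bounded multiplicative Hankel operator M(α), the rule m**(I* a) := (α, a) = ∑_n α(n) a(n) for a ∈ ℓ²(ℕ+) extends to a well-defined element m** ∈ ℳ₀** with ‖m**‖ ≤ ‖M(α)‖ and I**(m**) = α. -/

import Mathlib

open scoped ComplexConjugate

set_option synthInstance.maxHeartbeats 1000000
set_option maxHeartbeats 1000000

noncomputable section

abbrev H := lp (fun _ : ℕ+ => ℂ) 2

/-- `T` is the multiplicative Hankel operator with matrix `{α(nm)}`. -/
def IsHankel (T : H →L[ℂ] H) (α : ℕ+ → ℂ) : Prop :=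
  ∀ n m : ℕ+, (T (lp.single 2 n 1) : ℕ+ → ℂ) m = α (n * m)

/-- The topological dual of a seminormed space `E` (`NormedSpace.Dual` of the older Mathlib,
now `StrongDual`), restored as a type synonym with its own instances. -/
def NormedSpace.Dual (𝕜 : Type*) [NontriviallyNormedField 𝕜] (E : Type*)
    [SeminormedAddCommGroup E] [NormedSpace 𝕜 E] : Type _ := E →L[𝕜] 𝕜

instance NormedSpace.Dual.instSeminormedAddCommGroup (𝕜 : Type*) [NontriviallyNormedField 𝕜]
    (E : Type*) [SeminormedAddCommGroup E] [NormedSpace 𝕜 E] :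
    SeminormedAddCommGroup (NormedSpace.Dual 𝕜 E) :=
  inferInstanceAs (SeminormedAddCommGroup (E →L[𝕜] 𝕜))

instance NormedSpace.Dual.instNormedSpace (𝕜 : Type*) [NontriviallyNormedField 𝕜]
    (E : Type*) [SeminormedAddCommGroup E] [NormedSpace 𝕜 E] :
    NormedSpace 𝕜 (NormedSpace.Dual 𝕜 E) :=
  inferInstanceAs (NormedSpace 𝕜 (E →L[𝕜] 𝕜))

instance NormedSpace.Dual.instFunLike (𝕜 : Type*) [NontriviallyNormedField 𝕜]
    (E : Type*) [SeminormedAddCommGroup E] [NormedSpace 𝕜 E] :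
    FunLike (NormedSpace.Dual 𝕜 E) E 𝕜 :=
  inferInstanceAs (FunLike (E →L[𝕜] 𝕜) E 𝕜)

/-!
By Hahn–Banach it suffices to bound `|(α, a)| ≤ ‖T‖ ‖I* a‖`. Compress `T` by the diagonal operator
`D_ε` with weights `n^(-ε)`, `ε > 0`. The weights are completely multiplicative, so `D_ε T D_ε` is
again a multiplicative Hankel operator, with symbol `n^(-ε) α(n)`; they tend to `0`, so it is
compact, hence lies in `ℳ₀`; and `‖D_ε‖ ≤ 1`. Therefore
`|(n^(-ε) α, a)| = |(I* a)(D_ε T D_ε)| ≤ ‖T‖ ‖I* a‖`, and `ε → 0` with dominated convergence gives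
the bound.
-/

open Filter
open scoped ENNReal NNReal Topology

namespace lp

section Pairing

variable {ι 𝕜 : Type*} [NontriviallyNormedField 𝕜] [CompleteSpace 𝕜]
  {p q : ℝ≥0∞}

theorem summable_mul_apply (hpq : p.toReal.HolderConjugate q.toReal)
    (x : lp (fun _ : ι => 𝕜) p) (a : lp (fun _ : ι => 𝕜) q) :
    Summable fun i => x i * a i :=
  Summable.of_norm <| by simpa only [norm_mul] using lp.summable_mul hpq x a

variable [Fact (1 ≤ p)] [Fact (1 ≤ q)] (hpq : p.toReal.HolderConjugate q.toReal)

variable (𝕜) in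
def pairing : lp (fun _ : ι => 𝕜) p →L[𝕜] lp (fun _ : ι => 𝕜) q →L[𝕜] 𝕜 :=
  LinearMap.mkContinuous₂
    (LinearMap.mk₂ 𝕜 (fun x a => ∑' i, x i * a i)
      (fun x y a => by
        simp only [coeFn_add, Pi.add_apply, add_mul]
        exact (summable_mul_apply hpq x a).tsum_add (summable_mul_apply hpq y a))
      (fun c x a => by
        simp only [coeFn_smul, Pi.smul_apply, smul_eq_mul, mul_assoc]
        exact tsum_mul_left)
      (fun x a b => by
        simp only [coeFn_add, Pi.add_apply, mul_add]
        exact (summable_mul_apply hpq x a).tsum_add (summable_mul_apply hpq x b))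
      (fun c x a => by
        simp only [coeFn_smul, Pi.smul_apply, smul_eq_mul, mul_left_comm _ c]
        exact tsum_mul_left))
    1 fun x a => by
      simp only [LinearMap.mk₂_apply, one_mul]
      refine (norm_tsum_le_tsum_norm ?_).trans ?_
      · simpa only [norm_mul] using lp.summable_mul hpq x a
      · simpa only [norm_mul] using lp.tsum_mul_le_mul_norm' hpq x a

theorem pairing_apply (x : lp (fun _ : ι => 𝕜) p) (a : lp (fun _ : ι => 𝕜) q) :
    pairing 𝕜 hpq x a = ∑' i, x i * a i :=
  rfl

variable {E : Type*} [SeminormedAddCommGroup E] [NormedSpace 𝕜 E]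
  (I : E →L[𝕜] lp (fun _ : ι => 𝕜) p)

variable (𝕜) in
/-- The adjoint `I*` of the paper: `pairingTranspose 𝕜 hpq I a x = ∑' i, I x i * a i`. -/
def pairingTranspose : lp (fun _ : ι => 𝕜) q →L[𝕜] StrongDual 𝕜 E :=
  (ContinuousLinearMap.compL 𝕜 E _ 𝕜).flip I ∘L (pairing 𝕜 hpq).flip

end Pairing

section Diagonal

variable {ι 𝕜 : Type*} [NontriviallyNormedField 𝕜] {p : ℝ≥0∞}

theorem norm_mul_apply_le (w : lp (fun _ : ι => 𝕜) ∞) (a : lp (fun _ : ι => 𝕜) p) (i : ι) :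
    ‖w i * a i‖ ≤ ‖(‖w‖ • toNorm a) i‖ := by
  rw [coeFn_smul, Pi.smul_apply, toNorm_coe, smul_eq_mul, norm_mul,
    Real.norm_of_nonneg (by positivity)]
  exact mul_le_mul_of_nonneg_right (norm_apply_le_norm ENNReal.top_ne_zero w i) (norm_nonneg _)

variable [Fact (1 ≤ p)]

variable (𝕜 p) in
def diagonal : lp (fun _ : ι => 𝕜) ∞ →L[𝕜] lp (fun _ : ι => 𝕜) p →L[𝕜] lp (fun _ : ι => 𝕜) p :=
  LinearMap.mkContinuous₂
    (LinearMap.mk₂ 𝕜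
      (fun w a => ⟨⇑w * ⇑a, (lp.memℓp (‖w‖ • toNorm a)).mono' (norm_mul_apply_le w a)⟩)
      (fun _ _ _ => ext <| funext fun _ => add_mul _ _ _)
      (fun _ _ _ => ext <| funext fun _ => mul_assoc _ _ _)
      (fun _ _ _ => ext <| funext fun _ => mul_add _ _ _)
      (fun _ _ _ => ext <| funext fun _ => mul_left_comm _ _ _))
    1 fun w a => by
      have hp : p ≠ 0 := (zero_lt_one.trans_le Fact.out).ne'
      rw [one_mul]
      refine (norm_mono hp (norm_mul_apply_le w a)).trans ?_
      rw [norm_const_smul hp, norm_toNorm, norm_norm]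

@[simp]
theorem coeFn_diagonal (w : lp (fun _ : ι => 𝕜) ∞) (a : lp (fun _ : ι => 𝕜) p) :
    ⇑(diagonal 𝕜 p w a) = ⇑w * ⇑a :=
  rfl

theorem norm_diagonal_le (w : lp (fun _ : ι => 𝕜) ∞) : ‖diagonal 𝕜 p w‖ ≤ ‖w‖ :=
  ((diagonal 𝕜 p).le_opNorm w).trans <|
    mul_le_of_le_one_left (norm_nonneg w) (LinearMap.mkContinuous₂_norm_le _ zero_le_one _)

theorem diagonal_apply_single [DecidableEq ι] (w : lp (fun _ : ι => 𝕜) ∞) (k : ι) (c : 𝕜) :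
    diagonal 𝕜 p w (lp.single p k c) = w k • lp.single p k c := by
  ext i
  by_cases h : i = k
  · subst h; simp
  · simp [h]

theorem diagonal_single [DecidableEq ι] (k : ι) (c : 𝕜) :
    diagonal 𝕜 p (lp.single ∞ k c) =
      (ContinuousLinearMap.toSpanSingleton 𝕜 (lp.single p k c)).comp (evalCLM 𝕜 _ p k) := by
  ext a i
  by_cases h : i = k
  · subst h; simp [evalCLM, mul_comm]
  · simp [evalCLM, h]

theorem tendsto_sum_single_of_tendsto_cofinite [DecidableEq ι] {w : lp (fun _ : ι => 𝕜) ∞}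
    (hw : Tendsto w cofinite (𝓝 0)) :
    Tendsto (fun s : Finset ι => ∑ k ∈ s, lp.single ∞ k (w k)) atTop (𝓝 w) := by
  rw [Metric.tendsto_atTop]
  intro ε hε
  have hfin : {k | ε / 2 ≤ ‖w k‖}.Finite := by
    simpa using (tendsto_zero_iff_norm_tendsto_zero.mp hw).eventually (gt_mem_nhds (half_pos hε))
  refine ⟨hfin.toFinset, fun s hs => ?_⟩
  rw [dist_eq_norm]
  refine (norm_le_of_forall_le (half_pos hε).le fun i => ?_).trans_lt (half_lt_self hε)
  rw [coeFn_sub, Pi.sub_apply, coeFn_sum, Finset.sum_apply]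
  simp only [lp.single_apply, Finset.sum_pi_single]
  split_ifs with hi
  · simp [(half_pos hε).le]
  · rw [zero_sub, _root_.norm_neg]
    exact (not_le.mp fun h : ε / 2 ≤ ‖w i‖ => hi (hs (hfin.mem_toFinset.mpr h))).le

theorem isCompactOperator_diagonal [ProperSpace 𝕜] {w : lp (fun _ : ι => 𝕜) ∞}
    (hw : Tendsto w cofinite (𝓝 0)) : IsCompactOperator (diagonal 𝕜 p w) := by
  classical
  refine isCompactOperator_of_tendsto
    (((diagonal 𝕜 p).continuous.tendsto w).comp (tendsto_sum_single_of_tendsto_cofinite hw))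
    (Eventually.of_forall fun s => ?_)
  have : diagonal 𝕜 p (∑ k ∈ s, lp.single ∞ k (w k)) ∈ compactOperator (RingHom.id 𝕜) _ _ := by
    rw [map_sum]
    refine Submodule.sum_mem _ fun k _ => ?_
    rw [diagonal_single]
    exact (isCompactOperator_of_locallyCompactSpace_rng
      (ContinuousLinearMap.toSpanSingleton 𝕜 (lp.single (E := fun _ : ι => 𝕜) p k (w k)))).comp_clm
      (evalCLM 𝕜 (fun _ : ι => 𝕜) p k)
  exact this

end Diagonal
end lp

theorem exists_strongDual_comp_eq_of_norm_le {𝕜 F E : Type*} [RCLike 𝕜] [AddCommGroup F]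
    [Module 𝕜 F] [SeminormedAddCommGroup E] [NormedSpace 𝕜 E] (L : F →ₗ[𝕜] E) (ℓ : F →ₗ[𝕜] 𝕜)
    {C : ℝ} (hC : 0 ≤ C) (h : ∀ x, ‖ℓ x‖ ≤ C * ‖L x‖) :
    ∃ g : StrongDual 𝕜 E, ‖g‖ ≤ C ∧ ∀ x, g (L x) = ℓ x := by
  have hker : LinearMap.ker L ≤ LinearMap.ker ℓ := fun x hx => by
    simpa [LinearMap.mem_ker.mp hx] using h x
  let ℓ' : LinearMap.range L →ₗ[𝕜] 𝕜 :=
    ((LinearMap.ker L).liftQ ℓ hker).comp L.quotKerEquivRange.symm.toLinearMap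
  have hℓ' : ∀ x, ℓ' ⟨L x, LinearMap.mem_range_self L x⟩ = ℓ x := fun x => by
    simp [ℓ', LinearMap.quotKerEquivRange_symm_apply_image]
  have hbound : ∀ y, ‖ℓ' y‖ ≤ C * ‖y‖ := by
    rintro ⟨_, x, rfl⟩
    exact (hℓ' x).symm ▸ h x
  obtain ⟨g, hg, hg_norm⟩ := exists_extension_norm_eq _ (ℓ'.mkContinuous C hbound)
  exact ⟨g, hg_norm.trans_le (LinearMap.mkContinuous_norm_le _ hC _),
    fun x => (hg _).trans (hℓ' x)⟩

theorem ENNReal.holderConjugate_toReal_two :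
    (2 : ℝ≥0∞).toReal.HolderConjugate (2 : ℝ≥0∞).toReal := by
  rw [ENNReal.toReal_ofNat]
  exact .two_two

theorem norm_natCast_rpow_neg_le_one (ε : ℝ≥0) (n : ℕ+) :
    ‖(((n : ℝ) ^ (-(ε : ℝ)) : ℝ) : ℂ)‖ ≤ 1 := by
  rw [Complex.norm_real, Real.norm_of_nonneg (by positivity)]
  exact Real.rpow_le_one_of_one_le_of_nonpos (by exact_mod_cast n.pos) (by simp)

def powWeight (ε : ℝ≥0) : lp (fun _ : ℕ+ => ℂ) ∞ :=
  ⟨fun n => ((n : ℝ) ^ (-(ε : ℝ)) : ℝ), memℓp_infty ⟨1, by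
    rintro _ ⟨n, rfl⟩
    exact norm_natCast_rpow_neg_le_one ε n⟩⟩

theorem powWeight_apply (ε : ℝ≥0) (n : ℕ+) : powWeight ε n = ((n : ℝ) ^ (-(ε : ℝ)) : ℝ) :=
  rfl

theorem norm_powWeight_le_one (ε : ℝ≥0) : ‖powWeight ε‖ ≤ 1 :=
  lp.norm_le_of_forall_le zero_le_one (norm_natCast_rpow_neg_le_one ε)

theorem powWeight_mul (ε : ℝ≥0) (n m : ℕ+) :
    powWeight ε (n * m) = powWeight ε n * powWeight ε m := by
  simp only [powWeight_apply, PNat.mul_coe, Nat.cast_mul,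
    Real.mul_rpow (Nat.cast_nonneg _) (Nat.cast_nonneg _), Complex.ofReal_mul]

theorem tendsto_powWeight_cofinite {ε : ℝ≥0} (hε : 0 < ε) :
    Tendsto (powWeight ε) cofinite (𝓝 0) := by
  have hcoe : Tendsto (fun n : ℕ+ => (n : ℝ)) cofinite atTop :=
    tendsto_natCast_atTop_atTop.comp
      (Nat.cofinite_eq_atTop ▸ PNat.coe_injective.tendsto_cofinite)
  rw [← Complex.ofReal_zero]
  exact ((tendsto_rpow_neg_atTop (NNReal.coe_pos.mpr hε)).comp hcoe).ofReal

theorem tendsto_powWeight_apply (n : ℕ+) :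
    Tendsto (fun ε => powWeight ε n) (𝓝 0) (𝓝 1) := by
  have hcont : Continuous fun ε : ℝ≥0 => powWeight ε n :=
    Complex.continuous_ofReal.comp <|
      (continuous_iff_continuousAt.mpr fun _ => Real.continuousAt_const_rpow (by positivity)).comp
        NNReal.continuous_coe.neg
  simpa [powWeight_apply] using hcont.tendsto 0

def powWeightCompression (T : H →L[ℂ] H) (ε : ℝ≥0) : H →L[ℂ] H :=
  lp.diagonal ℂ 2 (powWeight ε) ∘L T ∘L lp.diagonal ℂ 2 (powWeight ε)

theorem norm_powWeightCompression_le (T : H →L[ℂ] H) (ε : ℝ≥0) :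
    ‖powWeightCompression T ε‖ ≤ ‖T‖ := by
  have hD : ‖lp.diagonal ℂ 2 (powWeight ε)‖ ≤ 1 :=
    (lp.norm_diagonal_le _).trans (norm_powWeight_le_one ε)
  calc ‖powWeightCompression T ε‖
      ≤ ‖lp.diagonal ℂ 2 (powWeight ε)‖ * (‖T‖ * ‖lp.diagonal ℂ 2 (powWeight ε)‖) :=
        (ContinuousLinearMap.opNorm_comp_le _ _).trans
          (mul_le_mul_of_nonneg_left (ContinuousLinearMap.opNorm_comp_le _ _) (norm_nonneg _))
    _ ≤ 1 * (‖T‖ * 1) := by gcongr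
    _ = ‖T‖ := by ring

theorem isCompactOperator_powWeightCompression (T : H →L[ℂ] H) {ε : ℝ≥0} (hε : 0 < ε) :
    IsCompactOperator (powWeightCompression T ε) :=
  (lp.isCompactOperator_diagonal (p := 2) (tendsto_powWeight_cofinite hε)).comp_clm
    (T ∘L lp.diagonal ℂ 2 (powWeight ε))

namespace IsHankel

variable {T : H →L[ℂ] H} {α : ℕ+ → ℂ}

theorem coeFn_apply_single_one (hT : IsHankel T α) : ⇑(T (lp.single 2 1 1)) = α :=
  funext fun m => by simpa using hT 1 m

theorem powWeightCompression (hT : IsHankel T α) (ε : ℝ≥0) :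
    IsHankel (powWeightCompression T ε) (fun n => powWeight ε n * α n) := by
  intro n m
  simp only [_root_.powWeightCompression, ContinuousLinearMap.comp_apply,
    lp.diagonal_apply_single, map_smul, lp.coeFn_diagonal, lp.coeFn_smul, Pi.mul_apply,
    Pi.smul_apply, smul_eq_mul, hT n m, powWeight_mul]
  ring

theorem norm_tsum_mul_le {S₀ : Submodule ℂ (H →L[ℂ] H)}
    (hS₀ : ∀ S β, IsHankel S β → IsCompactOperator S → S ∈ S₀) {I : S₀ →L[ℂ] H}
    (hI : ∀ (S : S₀) (β : ℕ+ → ℂ), IsHankel S.val β → ((I S : ℕ+ → ℂ) = β))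
    (hT : IsHankel T α) (a : H) (φ : NormedSpace.Dual ℂ S₀)
    (hφ : ∀ T' : S₀, φ T' = ∑' n, (I T' : ℕ+ → ℂ) n * a n) :
    ‖∑' n, α n * a n‖ ≤ ‖T‖ * ‖φ‖ := by
  have hmem : ∀ ε : ℝ≥0, 0 < ε → _root_.powWeightCompression T ε ∈ S₀ := fun ε hε =>
    hS₀ _ _ (hT.powWeightCompression ε) (isCompactOperator_powWeightCompression T hε)
  have hφε : ∀ ε (hε : 0 < ε), φ ⟨_, hmem ε hε⟩ = ∑' n, powWeight ε n * (α n * a n) :=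
    fun ε hε => by
      rw [hφ, hI _ _ (hT.powWeightCompression ε)]
      simp_rw [mul_assoc]
  have hbound : ∀ ε (hε : 0 < ε), ‖φ ⟨_, hmem ε hε⟩‖ ≤ ‖T‖ * ‖φ‖ := fun ε hε =>
    (φ.le_opNorm _).trans <| by
      rw [mul_comm]
      exact mul_le_mul_of_nonneg_right (norm_powWeightCompression_le T ε) φ.opNorm_nonneg
  have hsum : Summable fun n => ‖α n * a n‖ := by
    simpa only [← hT.coeFn_apply_single_one, norm_mul] using
      lp.summable_mul ENNReal.holderConjugate_toReal_two (T (lp.single 2 1 1)) a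
  have hlim : Tendsto (fun ε => ∑' n, powWeight ε n * (α n * a n)) (𝓝[>] 0)
      (𝓝 (∑' n, α n * a n)) :=
    tendsto_tsum_of_dominated_convergence hsum
      (fun n => by
        simpa using ((tendsto_powWeight_apply n).mono_left nhdsWithin_le_nhds).mul_const
          (α n * a n))
      (Eventually.of_forall fun ε n => by
        rw [norm_mul]
        exact mul_le_of_le_one_left (norm_nonneg _) (norm_natCast_rpow_neg_le_one ε n))
  exact le_of_tendsto hlim.norm <|
    eventually_nhdsWithin_of_forall fun ε hε => hφε ε hε ▸ hbound ε hε

end IsHankel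

/-- given a bounded multiplicative Hankel operator `M(α)`, the rule
`m**(I* a) := (α, a) = ∑ α(n) a(n)` extends to a well-defined `m** ∈ ℳ₀**` with
`‖m**‖ ≤ ‖M(α)‖` and `I**(m**) = α`. -/
theorem bounded_hankel_gives_bidual_element
    (S₀ : Submodule ℂ (H →L[ℂ] H))
    (hS₀ : (S₀ : Set (H →L[ℂ] H)) = {T | (∃ α, IsHankel T α) ∧ IsCompactOperator T})
    (I : ↥S₀ →L[ℂ] H)
    (hI : ∀ (T : ↥S₀) (α : ℕ+ → ℂ), IsHankel T.val α → ((I T : ℕ+ → ℂ) = α))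
    (α : ℕ+ → ℂ) (T : H →L[ℂ] H) (hT : IsHankel T α) :
    ∃ mss : NormedSpace.Dual ℂ (NormedSpace.Dual ℂ ↥S₀), ‖mss‖ ≤ ‖T‖ ∧
      ∀ (a : H) (φ : NormedSpace.Dual ℂ ↥S₀),
        (∀ T' : ↥S₀, φ T' = ∑' n : ℕ+, (I T' : ℕ+ → ℂ) n * a n) →
        mss φ = ∑' n : ℕ+, α n * a n := by
  have hS₀' : ∀ S β, IsHankel S β → IsCompactOperator S → S ∈ S₀ := fun S β hS hc => by
    rw [← SetLike.mem_coe, hS₀]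
    exact ⟨⟨β, hS⟩, hc⟩
  let L := lp.pairingTranspose ℂ ENNReal.holderConjugate_toReal_two (E := S₀) I
  obtain ⟨mss, hmss_norm, hmss⟩ := exists_strongDual_comp_eq_of_norm_le
    (E := NormedSpace.Dual ℂ S₀) L.toLinearMap
    (lp.pairing ℂ ENNReal.holderConjugate_toReal_two (T (lp.single 2 1 1))).toLinearMap
    (norm_nonneg T) fun a => by
      rw [ContinuousLinearMap.coe_coe, lp.pairing_apply, hT.coeFn_apply_single_one]
      exact hT.norm_tsum_mul_le hS₀' hI a (L a) fun _ => rfl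
  refine ⟨mss, hmss_norm, fun a φ hφ => ?_⟩
  obtain rfl : φ = L a := ContinuousLinearMap.ext hφ
  exact (hmss a).trans (by rw [← hT.coeFn_apply_single_one]; rfl)
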